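/- Let F2(X,Y,Z) = (X+Y)^4 + X^2*Y^2 + X*Y*Z*(X+Y+Z) + Z^2*(X+Y+Z)^2, regarded over an algebraic closure K of F_2. Then there is no nonzero vector (x,y,z) in K^3 at which F2 and all three partial derivatives ∂F2/∂X, ∂F2/∂Y, ∂F2/∂Z vanish simultaneously; that is, F2 defines a nonsingular plane quartic curve. -/

import Mathlib

/-!
In characteristic 2 the partial derivatives of `F2` are `YZ(Y+Z)`, `XZ(X+Z)` and `XY(X+Y)`, so at a
common zero any two coordinates are equal or one of them vanishes: the point is `t • e` with
`e ∈ 𝔽₂³`. On such a point `F2` takes the value `t⁴`, hence `t = 0`.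
-/

open MvPolynomial

/-- The plane quartic `F2` over the algebraic closure of `𝔽₂`. -/
noncomputable def F2polyBar : MvPolynomial (Fin 3) (AlgebraicClosure (ZMod 2)) :=
  (X 0 + X 1) ^ 4 + (X 0) ^ 2 * (X 1) ^ 2
    + X 0 * X 1 * X 2 * (X 0 + X 1 + X 2)
    + (X 2) ^ 2 * (X 0 + X 1 + X 2) ^ 2

section CharTwo

variable {K : Type*} [CommRing K] [IsDomain K] [CharP K 2]

theorem CharTwo.mul_mul_add_eq_zero_iff {a b : K} :
    a * b * (a + b) = 0 ↔ a = 0 ∨ b = 0 ∨ a = b := by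
  simp only [mul_eq_zero, CharTwo.add_eq_zero, or_assoc]

theorem CharTwo.eq_zero_or_eq_of_mul_mul_add_eq_zero {a b : K} (ha : a ≠ 0)
    (h : a * b * (a + b) = 0) : b = 0 ∨ b = a := by
  rcases CharTwo.mul_mul_add_eq_zero_iff.mp h with h | h | h
  exacts [absurd h ha, .inl h, .inr h.symm]

/-- The quartic is `F2` written out in characteristic 2; being symmetric in `x, y, z`, it also yields
`y = 0` and `z = 0` after permuting the variables. -/
theorem CharTwo.eq_zero_of_quartic_eq_zero {x y z : K} (hxy : x * y * (x + y) = 0)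
    (hxz : x * z * (x + z) = 0)
    (hQ : x ^ 4 + y ^ 4 + z ^ 4 + x ^ 2 * y ^ 2 + x ^ 2 * z ^ 2 + y ^ 2 * z ^ 2
      + x * y * z * (x + y + z) = 0) : x = 0 := by
  by_contra hx
  have h2 : (2 : K) = 0 := CharTwo.two_eq_zero
  refine pow_ne_zero 4 hx ?_
  rcases eq_zero_or_eq_of_mul_mul_add_eq_zero hx hxy with hy | hy <;>
    rcases eq_zero_or_eq_of_mul_mul_add_eq_zero hx hxz with hz | hz <;>
    rw [hy, hz] at hQ
  · linear_combination hQ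
  · linear_combination hQ - x ^ 4 * h2
  · linear_combination hQ - x ^ 4 * h2
  · linear_combination hQ - 4 * x ^ 4 * h2

end CharTwo

section F2polyBar

local notation "K̄" => AlgebraicClosure (ZMod 2)

variable (v : Fin 3 → K̄)

theorem eval_F2polyBar :
    eval v F2polyBar = v 0 ^ 4 + v 1 ^ 4 + v 2 ^ 4 + v 0 ^ 2 * v 1 ^ 2 + v 0 ^ 2 * v 2 ^ 2
      + v 1 ^ 2 * v 2 ^ 2 + v 0 * v 1 * v 2 * (v 0 + v 1 + v 2) := by
  simp only [F2polyBar, map_add, map_mul, map_pow, eval_X]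
  linear_combination (2 * v 0 ^ 3 * v 1 + 3 * v 0 ^ 2 * v 1 ^ 2 + 2 * v 0 * v 1 ^ 3
    + v 2 ^ 2 * (v 0 * v 1 + v 0 * v 2 + v 1 * v 2)) * CharTwo.two_eq_zero (R := K̄)

theorem eval_pderiv_F2polyBar :
    eval v (pderiv 0 F2polyBar) = v 1 * v 2 * (v 1 + v 2) ∧
      eval v (pderiv 1 F2polyBar) = v 0 * v 2 * (v 0 + v 2) ∧
      eval v (pderiv 2 F2polyBar) = v 0 * v 1 * (v 0 + v 1) := by
  simp only [F2polyBar, map_add, map_mul, map_pow, Derivation.leibniz, Derivation.leibniz_pow,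
    pderiv_X, Pi.single_eq_same, Pi.single_eq_of_ne, ne_eq, one_ne_zero, zero_ne_one, Fin.reduceEq,
    not_false_eq_true, smul_eq_mul, nsmul_eq_mul, smul_add, Nat.add_one_sub_one, Nat.cast_ofNat,
    pow_one, mul_one, mul_zero, add_zero, zero_add, eval_ofNat, eval_X]
  refine ⟨?_, ?_, ?_⟩
  · linear_combination (2 * (v 0 + v 1) ^ 3 + v 0 * v 1 ^ 2 + v 0 * v 1 * v 2
      + v 2 ^ 2 * (v 0 + v 1 + v 2)) * CharTwo.two_eq_zero (R := K̄)
  · linear_combination (2 * (v 0 + v 1) ^ 3 + v 0 ^ 2 * v 1 + v 0 * v 1 * v 2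
      + v 2 ^ 2 * (v 0 + v 1 + v 2)) * CharTwo.two_eq_zero (R := K̄)
  · linear_combination (v 0 * v 1 * v 2 + v 2 ^ 2 * (v 0 + v 1 + v 2)
      + (v 0 + v 1 + v 2) ^ 2 * v 2) * CharTwo.two_eq_zero (R := K̄)

end F2polyBar

theorem stmt_13 :
    ¬ ∃ v : Fin 3 → AlgebraicClosure (ZMod 2), v ≠ 0 ∧
      eval v F2polyBar = 0 ∧ ∀ i : Fin 3, eval v (pderiv i F2polyBar) = 0 := by
  rintro ⟨v, hv, hF, hd⟩
  rw [eval_F2polyBar] at hF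
  obtain ⟨d0, d1, d2⟩ := eval_pderiv_F2polyBar v
  have h12 := d0 ▸ hd 0
  have h02 := d1 ▸ hd 1
  have h01 := d2 ▸ hd 2
  have hx : v 0 = 0 := CharTwo.eq_zero_of_quartic_eq_zero h01 h02 hF
  have hy : v 1 = 0 := CharTwo.eq_zero_of_quartic_eq_zero (y := v 0)
    (by linear_combination h01) h12 (by linear_combination hF)
  have hz : v 2 = 0 := CharTwo.eq_zero_of_quartic_eq_zero (y := v 0) (z := v 1)
    (by linear_combination h02) (by linear_combination h12) (by linear_combination hF)
  exact hv (funext fun i => by fin_cases i <;> assumption)
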